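/- arXiv:2011.03613 — 2 statements merged into one kernel-verified Lean document; each statement's English description precedes it below -/
import Mathlib

section
/- Let R = ⋃ᵢ Rᵢ be the increasing union of t-adically complete subrings Rᵢ, each containing the element t. Then the pair (R, tR) is a henselian pair. -/
/-!
An `I`-adically complete ring is henselian at `I`, so each `(Rᵢ, tRᵢ)` is a henselian pair.
Henselianity passes to the directed union: a lifting problem over `R` involves only finitely
many elements (the coefficients of `f`, the approximate root `a₀`, and witnesses for
`f(a₀) ∈ tR` and for the invertibility of `f'(a₀)` modulo `t`), so it already lives in some
`Rᵢ`, where it is solved; the solution is then also a solution in `R`.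
-/

open Polynomial

namespace Subring

variable {R : Type*} [CommRing R]

lemma mk_mem_span_singleton {T : Subring R} {x t c : R} (hx : x ∈ T) (ht : t ∈ T)
    (hc : c ∈ T) (h : c * t = x) : (⟨x, hx⟩ : T) ∈ Ideal.span {⟨t, ht⟩} :=
  Ideal.mem_span_singleton'.mpr ⟨⟨c, hc⟩, Subtype.ext h⟩

lemma exists_finset_subset_of_directed {ι : Type*} {S : ι → Subring R}
    (hdir : Directed (· ≤ ·) S) (hunion : ∀ x : R, ∃ i, x ∈ S i) (s : Finset R) :
    ∃ i, (s : Set R) ⊆ S i := by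
  have : Nonempty ι := ⟨(hunion 0).choose⟩
  have hdir' : Directed (· ⊆ ·) fun i => (S i : Set R) := hdir.mono_comp _ fun _ _ h => h
  exact hdir'.exists_mem_subset_of_finset_subset_biUnion fun x _ => Set.mem_iUnion.mpr (hunion x)

lemma exists_isRoot_of_henselianRing {T : Subring R} {t : R} (ht : t ∈ T)
    (hT : HenselianRing T (Ideal.span {⟨t, ht⟩})) {f : R[X]} (hf : f.Monic)
    (hfT : (f.coeffs : Set R) ⊆ T) {a₀ b c d : R} (ha₀ : a₀ ∈ T) (hb : b ∈ T) (hc : c ∈ T)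
    (hd : d ∈ T) (hroot : c * t = f.eval a₀) (hunit : d * t = f.derivative.eval a₀ * b - 1) :
    ∃ a, f.IsRoot a ∧ a - a₀ ∈ Ideal.span {t} := by
  set F := f.toSubring T hfT
  have hF : F.map T.subtype = f := map_toSubring f T hfT
  have eval_F (x : T) : ((F.eval x : T) : R) = f.eval (x : R) := by
    rw [← hF, ← T.coe_subtype, eval_map_apply]
  have eval_F' (x : T) : ((F.derivative.eval x : T) : R) = f.derivative.eval (x : R) := by
    rw [← hF, derivative_map, ← T.coe_subtype, eval_map_apply]
  have hF_root : F.eval ⟨a₀, ha₀⟩ ∈ Ideal.span {⟨t, ht⟩} :=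
    mk_mem_span_singleton _ ht hc (hroot.trans (eval_F ⟨a₀, ha₀⟩).symm)
  have hF_unit :
      IsUnit (Ideal.Quotient.mk (Ideal.span {⟨t, ht⟩}) (F.derivative.eval ⟨a₀, ha₀⟩)) := by
    refine IsUnit.of_mul_eq_one (Ideal.Quotient.mk _ ⟨b, hb⟩) ?_
    rw [← map_mul, ← map_one (Ideal.Quotient.mk _), Ideal.Quotient.eq]
    exact mk_mem_span_singleton _ ht hd (by simp [hunit, eval_F'])
  obtain ⟨a, ha, haa₀⟩ := hT.is_henselian F ((monic_toSubring f T hfT).mpr hf) _ hF_root hF_unit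
  refine ⟨a, by rw [IsRoot, ← eval_F, ha.eq_zero, ZeroMemClass.coe_zero], ?_⟩
  simpa [Ideal.map_span] using Ideal.mem_map_of_mem T.subtype haa₀

end Subring

theorem HenselianRing.of_directed_union {R : Type*} [CommRing R] {ι : Type*}
    {S : ι → Subring R} (hdir : Directed (· ≤ ·) S) (hunion : ∀ x : R, ∃ i, x ∈ S i)
    {t : R} (ht : ∀ i, t ∈ S i) (hS : ∀ i, HenselianRing (S i) (Ideal.span {⟨t, ht i⟩})) :
    HenselianRing R (Ideal.span {t}) where
  jac := by
    rw [Ideal.span_le, Set.singleton_subset_iff, SetLike.mem_coe, Ideal.mem_jacobson_bot]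
    intro y
    obtain ⟨i, hy⟩ := hunion y
    have hti := (hS i).jac (Ideal.subset_span rfl)
    rw [Ideal.mem_jacobson_bot] at hti
    simpa using (hti ⟨y, hy⟩).map (S i).subtype
  is_henselian f hf a₀ hroot hunit := by
    obtain ⟨c, hc⟩ := Ideal.mem_span_singleton'.mp hroot
    obtain ⟨b, hb⟩ := Ideal.Quotient.mk_surjective hunit.unit⁻¹.val
    obtain ⟨d, hd⟩ : ∃ d, d * t = f.derivative.eval a₀ * b - 1 := by
      rw [← Ideal.mem_span_singleton', ← Ideal.Quotient.eq_zero_iff_mem, map_sub, map_mul, hb]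
      simp
    classical
    obtain ⟨i, hi⟩ := Subring.exists_finset_subset_of_directed hdir hunion
      ({a₀, b, c, d} ∪ f.coeffs)
    simp only [Finset.coe_union, Set.union_subset_iff, Finset.coe_insert,
      Finset.coe_singleton, Set.insert_subset_iff, Set.singleton_subset_iff] at hi
    obtain ⟨⟨ha₀i, hbi, hci, hdi⟩, hfi⟩ := hi
    exact Subring.exists_isRoot_of_henselianRing (ht i) (hS i) hf hfi ha₀i hbi hci hdi hc hd

theorem henselianRing_of_directed_union_of_adic_complete_general
    {R : Type*} [CommRing R] {ι : Type*}
    (S : ι → Subring R) (hdir : Directed (· ≤ ·) S)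
    (hunion : ∀ x : R, ∃ i, x ∈ S i)
    (t : R) (ht : ∀ i, t ∈ S i)
    (hcomplete : ∀ i, IsAdicComplete (Ideal.span {(⟨t, ht i⟩ : S i)}) (S i)) :
    HenselianRing R (Ideal.span {t}) :=
  HenselianRing.of_directed_union hdir hunion ht fun i =>
    have := hcomplete i
    IsAdicComplete.henselianRing (S i) _

/-- Let `R = ⋃ᵢ Rᵢ` be the increasing (directed) union of subrings
`Rᵢ`, each containing an element `t` and each `t`-adically complete.  Then `(R, tR)`
is a henselian pair. -/
theorem henselianRing_of_directed_union_of_adic_complete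
    {R : Type*} [CommRing R] {ι : Type*} [Nonempty ι]
    (S : ι → Subring R) (hdir : Directed (· ≤ ·) S)
    (hunion : ∀ x : R, ∃ i, x ∈ S i)
    (t : R) (ht : ∀ i, t ∈ S i)
    (hcomplete : ∀ i, IsAdicComplete (Ideal.span {(⟨t, ht i⟩ : S i)}) (S i)) :
    HenselianRing R (Ideal.span {t}) :=
  henselianRing_of_directed_union_of_adic_complete_general S hdir hunion t ht hcomplete
end

section
/- Let R be a ring with a submultiplicative complete nonarchimedean norm, and let s₁,…,s_n ∈ R generate the unit ideal, say a₁s₁ + ⋯ + a_n s_n = 1. If t₁,…,t_n ∈ R satisfy ‖a_j(s_j − t_j)‖ < 1 for all j, then t₁,…,t_n also generate the unit ideal of R. -/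
/-- Let `R` be a commutative ring with a complete nonarchimedean
(submultiplicative) norm, and let `s₁, …, s_n ∈ R` generate the unit ideal, say
`a₁s₁ + ⋯ + a_n s_n = 1`.  If `t₁, …, t_n ∈ R` satisfy `‖a_j s_j - a_j t_j‖ < 1`
for all `j`, then `t₁, …, t_n` also generate the unit ideal of `R`. -/
theorem span_eq_top_of_close_generators
    {R : Type*} [NormedCommRing R] [CompleteSpace R] [IsUltrametricDist R]
    {n : ℕ} (a s t : Fin n → R)
    (hgen : ∑ j, a j * s j = 1)
    (hclose : ∀ j, ‖a j * s j - a j * t j‖ < 1) :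
    Ideal.span (Set.range t) = ⊤ := by
  rcases Nat.eq_zero_or_pos n with rfl | hn
  · simp at hgen
    have : (0 : R) = 1 := by simpa using hgen
    exact Ideal.eq_top_of_isUnit_mem _ (Ideal.zero_mem _) (this ▸ isUnit_one)
  · set u : R := ∑ j, a j * t j with hu
    have h1u : ‖1 - u‖ < 1 := by
      have : 1 - u = ∑ j, (a j * s j - a j * t j) := by
        rw [Finset.sum_sub_distrib, hgen, hu]
      rw [this]
      have hne : (Finset.univ : Finset (Fin n)).Nonempty := ⟨⟨0, hn⟩, Finset.mem_univ _⟩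
      calc ‖∑ j, (a j * s j - a j * t j)‖
          ≤ Finset.univ.sup' hne (fun j => ‖a j * s j - a j * t j‖) :=
            hne.norm_sum_le_sup'_norm _
        _ < 1 := (Finset.sup'_lt_iff hne).mpr fun j _ => hclose j
    have hunit : IsUnit u := by
      have := (Units.oneSub (1 - u) h1u).isUnit
      simpa using this
    have hmem : u ∈ Ideal.span (Set.range t) := by
      refine Ideal.sum_mem _ fun j _ => Ideal.mul_mem_left _ _ ?_
      exact Ideal.subset_span ⟨j, rfl⟩
    exact Ideal.eq_top_of_isUnit_mem _ hmem hunit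
end
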